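/- Let h and, for each ε > 0, χ_ε be holomorphic functions on an open disk D(z_0, r_0) ⊂ ℂ, with sup_{z ∈ D(z_0,r_0)} |χ_ε(z)| → 0 as ε → 0. Set h_ε = h + χ_ε. Let z_{0,ε} = z_0 + δ_ε with δ_ε → 0. Then there exist ε_0 > 0 and 0 < r < r_0 such that for each 0 < ε ≤ ε_0, z_{0,ε} ∈ D(z_0, r) and the equation z − z_{0,ε} − ε·h_ε(z) = 0 has a unique solution z_ε in D(z_0, r), and moreover z_ε = z_{0,ε} + ε·h(z_0) + o(ε) as ε → 0. -/

import Mathlib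

open Filter Topology Metric Set Function
open scoped NNReal

/-! The equation says that `z` is a fixed point of `z ↦ z₀ + δ ε + ε (h z + χ ε z)`. On a closed
disc `closedBall z₀ r` with `r < r₀`, `h` is bounded and Lipschitz, and the Cauchy estimates make
`χ ε` Lipschitz with a constant proportional to `sup ‖χ ε‖`. So for small `ε` this map is a
contraction of the disc into itself, and Banach's fixed point theorem gives the unique solution
`Z ε`. Its defining equation forces `Z ε → z₀`, and then
`(Z ε - (z₀ + δ ε) - ε h z₀) / ε = h (Z ε) - h z₀ + χ ε (Z ε) → 0`. -/

theorem LipschitzOnWith.existsUnique_isFixedPt {α : Type*} [MetricSpace α] {f : α → α}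
    {s : Set α} {K : ℝ≥0} (hf : LipschitzOnWith K f s) (hK : K < 1) (hsc : IsComplete s)
    (hsf : MapsTo f s s) (hs : s.Nonempty) : ∃! x, x ∈ s ∧ IsFixedPt f x := by
  have hcontr : ContractingWith K (hsf.restrict f s s) :=
    ⟨hK, hsf.lipschitzOnWith_iff_restrict.1 hf⟩
  obtain ⟨x, hx⟩ := hs
  obtain ⟨y, hy, hfy, -⟩ := hcontr.exists_fixedPoint' hsc hsf hx (edist_ne_top _ _)
  refine ⟨y, ⟨hy, hfy⟩, fun z ⟨hz, hfz⟩ => ?_⟩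
  exact congrArg Subtype.val (hcontr.fixedPoint_unique' (x := ⟨z, hz⟩) (y := ⟨y, hy⟩)
    (Subtype.ext hfz) (Subtype.ext hfy))

theorem Filter.Eventually.exists_forall_unique {ι α : Type*} [Nonempty α] {l : Filter ι}
    {P : ι → α → Prop} (hP : ∀ᶠ i in l, ∃! x, P i x) :
    ∃ f : ι → α, ∀ᶠ i in l, P i (f i) ∧ ∀ x, P i x → x = f i := by
  refine ⟨fun i => Classical.epsilon (P i), hP.mono fun i ⟨x, hx, huniq⟩ => ?_⟩
  have hf : P i (Classical.epsilon (P i)) := Classical.epsilon_spec ⟨x, hx⟩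
  exact ⟨hf, fun y hy => (huniq y hy).trans (huniq _ hf).symm⟩

section CauchyEstimate

variable {F : Type*} [NormedAddCommGroup F] [NormedSpace ℂ F] {g : ℂ → F} {c : ℂ} {R r B : ℝ}

theorem norm_deriv_le_of_forall_norm_le (hg : DifferentiableOn ℂ g (ball c R))
    (hB : ∀ z ∈ ball c R, ‖g z‖ ≤ B) (hr : r < R) {w : ℂ} (hw : w ∈ closedBall c r) :
    ‖deriv g w‖ ≤ 2 * B / (R - r) := by
  have hρ : 0 < (R - r) / 2 := by linarith
  have hsub : closedBall w ((R - r) / 2) ⊆ ball c R :=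
    closedBall_subset_ball' (by linarith [mem_closedBall.1 hw])
  calc ‖deriv g w‖ ≤ B / ((R - r) / 2) :=
        Complex.norm_deriv_le_of_forall_mem_sphere_norm_le hρ (hg.diffContOnCl_ball hsub)
          fun z hz => hB z (hsub (sphere_subset_closedBall hz))
    _ = 2 * B / (R - r) := by field_simp

theorem lipschitzOnWith_closedBall_of_forall_norm_le (hg : DifferentiableOn ℂ g (ball c R))
    (hB : ∀ z ∈ ball c R, ‖g z‖ ≤ B) (hr : r < R) :
    LipschitzOnWith (2 * B / (R - r)).toNNReal g (closedBall c r) := by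
  refine (convex_closedBall c r).lipschitzOnWith_of_nnnorm_deriv_le
    (fun z hz => hg.differentiableAt (isOpen_ball.mem_nhds (closedBall_subset_ball hr hz)))
    fun z hz => ?_
  rw [← NNReal.coe_le_coe, coe_nnnorm, Real.coe_toNNReal']
  exact (norm_deriv_le_of_forall_norm_le hg hB hr hz).trans (le_max_left _ _)

theorem exists_lipschitzOnWith_closedBall (hg : DifferentiableOn ℂ g (ball c R)) (hr : r < R) :
    ∃ K, LipschitzOnWith K g (closedBall c r) := by
  obtain ⟨R', hrR', hR'R⟩ := exists_between hr
  obtain ⟨B, hB⟩ := (isCompact_closedBall c R').exists_bound_of_continuousOn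
    (hg.continuousOn.mono (closedBall_subset_ball hR'R))
  exact ⟨_, lipschitzOnWith_closedBall_of_forall_norm_le (hg.mono (ball_subset_ball hR'R.le))
    (fun z hz => hB z (ball_subset_closedBall hz)) hrR'⟩

end CauchyEstimate

section Perturbation

variable {ι : Type*} {l : Filter ι} {z₀ : ℂ} {r A : ℝ} {c t : ι → ℂ} {G : ι → ℂ → ℂ}

theorem eventually_existsUnique_sub_sub_mul_eq_zero {K : ℝ≥0} (hr : 0 < r)
    (hc : Tendsto c l (𝓝 z₀)) (ht : Tendsto t l (𝓝 0))
    (hGA : ∀ᶠ i in l, ∀ z ∈ closedBall z₀ r, ‖G i z‖ ≤ A)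
    (hGK : ∀ᶠ i in l, LipschitzOnWith K (G i) (closedBall z₀ r)) :
    ∀ᶠ i in l, ∃! z, z ∈ closedBall z₀ r ∧ z - c i - t i * G i z = 0 := by
  have hcr : ∀ᶠ i in l, dist (c i) z₀ ≤ r / 2 :=
    hc.eventually (closedBall_mem_nhds z₀ (half_pos hr))
  have htA : ∀ᶠ i in l, ‖t i‖ * A ≤ r / 2 := by
    have : Tendsto (fun i => ‖t i‖ * A) l (𝓝 0) := by simpa using ht.norm.mul_const A
    exact this.eventually (ge_mem_nhds (half_pos hr))
  have htK : ∀ᶠ i in l, ‖t i‖₊ * K < 1 := by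
    have : Tendsto (fun i => ‖t i‖₊ * K) l (𝓝 0) := by simpa using ht.nnnorm.mul_const K
    exact this.eventually (gt_mem_nhds one_pos)
  filter_upwards [hcr, htA, htK, hGA, hGK] with i hcri htAi htKi hGAi hGKi
  set Φ : ℂ → ℂ := fun z => c i + t i * G i z
  have hΦ : ∀ z, z - c i - t i * G i z = 0 ↔ IsFixedPt Φ z := fun z => by
    rw [sub_sub, sub_eq_zero, IsFixedPt, eq_comm]
  have hmaps : MapsTo Φ (closedBall z₀ r) (closedBall z₀ r) := fun z hz => by
    rw [dist_eq_norm] at hcri; rw [mem_closedBall, dist_eq_norm]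
    calc ‖c i + t i * G i z - z₀‖ ≤ ‖c i - z₀‖ + ‖t i‖ * ‖G i z‖ := by
          rw [add_sub_right_comm, ← norm_mul]; exact norm_add_le _ _
      _ ≤ r / 2 + r / 2 :=
          add_le_add hcri ((mul_le_mul_of_nonneg_left (hGAi z hz) (norm_nonneg _)).trans htAi)
      _ = r := add_halves r
  have hlip : LipschitzOnWith (‖t i‖₊ * K) Φ (closedBall z₀ r) :=
    LipschitzOnWith.of_dist_le_mul fun x hx y hy => by
      rw [dist_add_left, dist_eq_norm, ← mul_sub, norm_mul, NNReal.coe_mul, coe_nnnorm,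
        mul_assoc, ← dist_eq_norm]
      gcongr
      exact hGKi.dist_le_mul x hx y hy
  simpa only [hΦ] using hlip.existsUnique_isFixedPt htKi isClosed_closedBall.isComplete hmaps
    (nonempty_closedBall.2 hr.le)

theorem tendsto_of_eventually_sub_sub_mul_eq_zero {s : Set ℂ} {Z : ι → ℂ}
    (hc : Tendsto c l (𝓝 z₀)) (ht : Tendsto t l (𝓝 0)) (hGA : ∀ᶠ i in l, ∀ z ∈ s, ‖G i z‖ ≤ A)
    (hZ : ∀ᶠ i in l, Z i ∈ s ∧ Z i - c i - t i * G i (Z i) = 0) : Tendsto Z l (𝓝 z₀) := by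
  have hZc : Tendsto (fun i => Z i - c i) l (𝓝 0) := by
    refine squeeze_zero_norm' ?_ (by simpa using ht.norm.mul_const A)
    filter_upwards [hGA, hZ] with i hGAi ⟨hZs, hZeq⟩
    rw [sub_eq_zero.1 hZeq, norm_mul]
    exact mul_le_mul_of_nonneg_left (hGAi _ hZs) (norm_nonneg _)
  simpa using hc.add hZc

theorem tendsto_sub_sub_mul_div_of_eq_zero {U : Set ℂ} {Z : ι → ℂ} {h : ℂ → ℂ}
    {χ : ι → ℂ → ℂ} (hU : U ∈ 𝓝 z₀) (hZ : Tendsto Z l (𝓝 z₀)) (hh : ContinuousAt h z₀)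
    (hχ : ∀ η > 0, ∀ᶠ i in l, ∀ z ∈ U, ‖χ i z‖ ≤ η) (ht : ∀ᶠ i in l, t i ≠ 0)
    (hZeq : ∀ᶠ i in l, Z i - c i - t i * (h (Z i) + χ i (Z i)) = 0) :
    Tendsto (fun i => (Z i - c i - t i * h z₀) / t i) l (𝓝 0) := by
  have hχZ : Tendsto (fun i => χ i (Z i)) l (𝓝 0) := by
    refine NormedAddGroup.tendsto_nhds_zero.2 fun η hη => ?_
    filter_upwards [hχ (η / 2) (half_pos hη), hZ.eventually hU] with i hχi hZi
    exact (hχi _ hZi).trans_lt (half_lt_self hη)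
  have hlim : Tendsto (fun i => h (Z i) - h z₀ + χ i (Z i)) l (𝓝 0) := by
    simpa using ((hh.tendsto.comp hZ).sub_const (h z₀)).add hχZ
  refine hlim.congr' ?_
  filter_upwards [ht, hZeq] with i hti hZi
  field_simp
  linear_combination -hZi

theorem exists_tendsto_eventually_unique_solution {h : ℂ → ℂ} {χ : ι → ℂ → ℂ} {r₀ : ℝ}
    (hr : 0 < r) (hrr₀ : r < r₀) (hh : DifferentiableOn ℂ h (ball z₀ r₀))
    (hχdiff : ∀ᶠ i in l, DifferentiableOn ℂ (χ i) (ball z₀ r₀))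
    (hχ : ∀ η > 0, ∀ᶠ i in l, ∀ z ∈ ball z₀ r₀, ‖χ i z‖ ≤ η)
    (hc : Tendsto c l (𝓝 z₀)) (ht : Tendsto t l (𝓝 0)) :
    ∃ Z : ι → ℂ, Tendsto Z l (𝓝 z₀) ∧ ∀ᶠ i in l, Z i - c i - t i * (h (Z i) + χ i (Z i)) = 0 ∧
      ∀ z ∈ closedBall z₀ r, z - c i - t i * (h z + χ i z) = 0 → z = Z i := by
  have hs : closedBall z₀ r ⊆ ball z₀ r₀ := closedBall_subset_ball hrr₀
  obtain ⟨A, hA⟩ := (isCompact_closedBall z₀ r).exists_bound_of_continuousOn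
    (hh.continuousOn.mono hs)
  obtain ⟨K, hK⟩ := exists_lipschitzOnWith_closedBall hh hrr₀
  have hG : ∀ᶠ i in l, (∀ z ∈ closedBall z₀ r, ‖h z + χ i z‖ ≤ A + 1) ∧
      LipschitzOnWith (K + (2 * 1 / (r₀ - r)).toNNReal) (fun z => h z + χ i z)
        (closedBall z₀ r) := by
    filter_upwards [hχ 1 one_pos, hχdiff] with i hχi hχdiffi
    exact ⟨fun z hz => (norm_add_le _ _).trans (add_le_add (hA z hz) (hχi z (hs hz))),
      hK.add (lipschitzOnWith_closedBall_of_forall_norm_le hχdiffi hχi hrr₀)⟩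
  obtain ⟨Z, hZ⟩ := (eventually_existsUnique_sub_sub_mul_eq_zero hr hc ht
    (hG.mono fun _ => And.left) (hG.mono fun _ => And.right)).exists_forall_unique
  refine ⟨Z, tendsto_of_eventually_sub_sub_mul_eq_zero hc ht (hG.mono fun _ => And.left)
    (hZ.mono fun _ hZi => hZi.1), ?_⟩
  filter_upwards [hZ] with i hZi
  exact ⟨hZi.1.2, fun z hz hzeq => hZi.2 z ⟨hz, hzeq⟩⟩

end Perturbation

/-- Holomorphic perturbation lemma: if h_ε = h + χ_ε with h, χ_ε holomorphic on
D(z₀, r₀), sup_{D(z₀,r₀)}|χ_ε| → 0 as ε → 0⁺, and z_{0,ε} = z₀ + δ_ε with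
δ_ε → 0, then there are ε₀ > 0 and 0 < r < r₀ such that for 0 < ε ≤ ε₀ the
equation z − z_{0,ε} − ε·h_ε(z) = 0 has a unique solution z_ε in D(z₀, r),
and z_ε = z_{0,ε} + ε·h(z₀) + o(ε). -/
theorem stmt_5 (z₀ : ℂ) (r₀ : ℝ) (hr₀ : 0 < r₀)
    (h : ℂ → ℂ) (χ : ℝ → ℂ → ℂ) (δ : ℝ → ℂ)
    (hh : DifferentiableOn ℂ h (ball z₀ r₀))
    (hχdiff : ∀ ε : ℝ, 0 < ε → DifferentiableOn ℂ (χ ε) (ball z₀ r₀))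
    (hχsup : ∀ η : ℝ, 0 < η → ∃ ε₁ : ℝ, 0 < ε₁ ∧
      ∀ ε : ℝ, 0 < ε → ε ≤ ε₁ → ∀ z ∈ ball z₀ r₀, ‖χ ε z‖ ≤ η)
    (hδ : Tendsto δ (𝓝[>] (0 : ℝ)) (𝓝 0)) :
    ∃ ε₀ : ℝ, 0 < ε₀ ∧ ∃ r : ℝ, 0 < r ∧ r < r₀ ∧ ∃ Z : ℝ → ℂ,
      (∀ ε : ℝ, 0 < ε → ε ≤ ε₀ →
        z₀ + δ ε ∈ ball z₀ r ∧
        Z ε ∈ ball z₀ r ∧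
        Z ε - (z₀ + δ ε) - (ε : ℂ) * (h (Z ε) + χ ε (Z ε)) = 0 ∧
        ∀ z ∈ ball z₀ r,
          z - (z₀ + δ ε) - (ε : ℂ) * (h z + χ ε z) = 0 → z = Z ε) ∧
      Tendsto (fun ε : ℝ => (Z ε - (z₀ + δ ε) - (ε : ℂ) * h z₀) / (ε : ℂ))
        (𝓝[>] (0 : ℝ)) (𝓝 0) := by
  set r := r₀ / 2
  have hr : 0 < r := half_pos hr₀
  have hχ : ∀ η > 0, ∀ᶠ ε in 𝓝[>] (0 : ℝ), ∀ z ∈ ball z₀ r₀, ‖χ ε z‖ ≤ η := fun η hη => by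
    obtain ⟨ε₁, hε₁, hχε⟩ := hχsup η hη
    filter_upwards [Ioc_mem_nhdsGT hε₁] with ε hε using hχε ε hε.1 hε.2
  have hc : Tendsto (fun ε => z₀ + δ ε) (𝓝[>] 0) (𝓝 z₀) := by simpa using hδ.const_add z₀
  have ht : Tendsto (fun ε : ℝ => (ε : ℂ)) (𝓝[>] 0) (𝓝 0) :=
    (Complex.continuous_ofReal.tendsto' 0 0 Complex.ofReal_zero).mono_left nhdsWithin_le_nhds
  have hpos : ∀ᶠ ε in 𝓝[>] (0 : ℝ), 0 < ε := eventually_mem_nhdsWithin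
  obtain ⟨Z, hZlim, hZ⟩ := exists_tendsto_eventually_unique_solution hr (half_lt_self hr₀) hh
    (hpos.mono hχdiff) hχ hc ht
  have hgood : ∀ᶠ ε in 𝓝[>] (0 : ℝ), z₀ + δ ε ∈ ball z₀ r ∧ Z ε ∈ ball z₀ r ∧
      Z ε - (z₀ + δ ε) - (ε : ℂ) * (h (Z ε) + χ ε (Z ε)) = 0 ∧
      ∀ z ∈ ball z₀ r, z - (z₀ + δ ε) - (ε : ℂ) * (h z + χ ε z) = 0 → z = Z ε := by
    filter_upwards [hZ, hc.eventually (ball_mem_nhds z₀ hr), hZlim.eventually (ball_mem_nhds z₀ hr)]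
      with ε ⟨hZeq, huniq⟩ hcε hZε
    exact ⟨hcε, hZε, hZeq, fun z hz => huniq z (ball_subset_closedBall hz)⟩
  obtain ⟨ε₀, hε₀, hgood_Ioc⟩ := mem_nhdsGT_iff_exists_Ioc_subset.1 hgood
  refine ⟨ε₀, hε₀, r, hr, half_lt_self hr₀, Z, fun ε hε hεε₀ => hgood_Ioc ⟨hε, hεε₀⟩, ?_⟩
  exact tendsto_sub_sub_mul_div_of_eq_zero (ball_mem_nhds z₀ hr₀) hZlim
    (hh.continuousOn.continuousAt (ball_mem_nhds z₀ hr₀)) hχ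
    (hpos.mono fun _ hε => Complex.ofReal_ne_zero.2 hε.ne') (hZ.mono fun _ hZε => hZε.1)
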